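/- Let n, k ∈ ℕ with 2k ≤ n. Draw Z uniformly at random from MF(n,k), the set of matching formulas with exactly k clauses over x_1,…,x_n, and then, given Z, draw α uniformly at random from sat(Z) (an assignment of the 2k variables of Z). Then the resulting random partial assignment α is uniformly distributed over all 2^{2k}·(n choose 2k) partial assignments that assign values in {0,1} to exactly 2k of the variables x_1,…,x_n; in particular, for every fixed partial assignment α₀ defined on exactly 2k variables, Pr[α = α₀] = 1/(2^{2k}·(n choose 2k)). -/

import Mathlib

open Finset Filter

/-- A 2-clause over variables `x_0, …, x_{n-1}`: an (ordered) pair of literals on two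
distinct variables, the first literal having the smaller variable index.  A literal is a
pair (variable, polarity).  There are `4 * (n choose 2)` such clauses. -/
abbrev Clause (n : ℕ) := {p : (Fin n × Bool) × (Fin n × Bool) // p.1.1 < p.2.1}

/-- Value of a literal under a total assignment. -/
def litVal {n : ℕ} (σ : Fin n → Bool) (ℓ : Fin n × Bool) : Bool :=
  if ℓ.2 then σ ℓ.1 else !(σ ℓ.1)

/-- A total assignment satisfies a 2-clause. -/
def clauseSat {n : ℕ} (σ : Fin n → Bool) (C : Clause n) : Prop :=
  litVal σ C.val.1 = true ∨ litVal σ C.val.2 = true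

/-- Probability of the event `P` under the uniform distribution on the finite type `Ω`. -/
noncomputable def pr (Ω : Type*) [Fintype Ω] (P : Ω → Prop) : ℝ :=
  (Nat.card {ω : Ω // P ω} : ℝ) / (Fintype.card Ω : ℝ)

/-- A partial assignment to the variables `x_0, …, x_{n-1}`. -/
abbrev PAssign (n : ℕ) := Fin n → Option Bool

/-- The (two-element) set of variables of a 2-clause. -/
def vars {n : ℕ} (C : Clause n) : Finset (Fin n) := {C.val.1.1, C.val.2.1}

/-- The set of variables assigned by a partial assignment. -/
def support {n : ℕ} (α : PAssign n) : Finset (Fin n) := univ.filter (fun x => (α x).isSome)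

/-- Value of a literal under a partial assignment. -/
def plitVal {n : ℕ} (α : PAssign n) (ℓ : Fin n × Bool) : Option Bool :=
  (α ℓ.1).map (fun b => if ℓ.2 then b else !b)

/-- A partial assignment satisfies a 2-clause. -/
def pClauseSat {n : ℕ} (α : PAssign n) (C : Clause n) : Prop :=
  plitVal α C.val.1 = some true ∨ plitVal α C.val.2 = some true

/-- The set of variables of a 2-CNF (a multiset of clauses). -/
def mvars {n : ℕ} (F : Multiset (Clause n)) : Finset (Fin n) := F.toFinset.biUnion vars

/-- `α ∈ sat(H)`: `α` is an assignment to exactly the variables of `H` satisfying `H`. -/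
def satAssign {n : ℕ} (H : Multiset (Clause n)) (α : PAssign n) : Prop :=
  support α = mvars H ∧ ∀ C ∈ H, pClauseSat α C

/-- `F ∧ α` is satisfiable: `α` extends to a total assignment satisfying `F`. -/
def extendable {n : ℕ} (F : Multiset (Clause n)) (α : PAssign n) : Prop :=
  ∃ σ : Fin n → Bool, (∀ x b, α x = some b → σ x = b) ∧ ∀ C ∈ F, clauseSat σ C

/-- `θ(H,F)`: the fraction of `α ∈ sat(H)` such that `F ∧ α` is satisfiable
(`1` if `H` is unsatisfiable). -/
noncomputable def theta {n : ℕ} (H F : Multiset (Clause n)) : ℝ :=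
  if Nat.card {α : PAssign n // satAssign H α} = 0 then 1
  else (Nat.card {α : PAssign n // satAssign H α ∧ extendable F α} : ℝ) /
    (Nat.card {α : PAssign n // satAssign H α} : ℝ)

/-- Partial assignments assigning exactly `k` variables (`𝓕₁(n,k)` sample space). -/
abbrev PAk (n k : ℕ) := {α : PAssign n // (support α).card = k}

open scoped Classical


section TwoStageHelpers

variable {n k : ℕ}

lemma mem_support_iff {γ : PAssign n} {x : Fin n} : x ∈ support γ ↔ (γ x).isSome := by
  simp [support]

lemma vars_card (C : Clause n) : (vars C).card = 2 := by
  rw [vars, Finset.card_insert_of_notMem (by simp [C.prop.ne]), Finset.card_singleton]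

lemma mvars_ofFn_eq (Z : Fin k → Clause n) :
    mvars (↑(List.ofFn Z) : Multiset (Clause n)) = univ.biUnion (fun i => vars (Z i)) := by
  ext x
  simp only [mvars, Finset.mem_biUnion, Multiset.mem_toFinset, Multiset.mem_coe,
    List.mem_ofFn, Set.mem_range, Finset.mem_univ, true_and]
  constructor
  · rintro ⟨C, ⟨i, rfl⟩, hx⟩; exact ⟨i, hx⟩
  · rintro ⟨i, hx⟩; exact ⟨Z i, ⟨i, rfl⟩, hx⟩

lemma satAssign_ofFn_iff (Z : Fin k → Clause n) (γ : PAssign n) :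
    satAssign (↑(List.ofFn Z) : Multiset (Clause n)) γ ↔
      (support γ = univ.biUnion fun i => vars (Z i)) ∧ ∀ i, pClauseSat γ (Z i) := by
  rw [satAssign, mvars_ofFn_eq]
  refine and_congr_right fun _ => ?_
  simp only [Multiset.mem_coe, List.mem_ofFn, Set.mem_range]
  exact ⟨fun h i => h _ ⟨i, rfl⟩, by rintro h C ⟨i, rfl⟩; exact h i⟩

lemma mvars_card (Z : Fin k → Clause n)
    (hZ : ∀ i j, i ≠ j → Disjoint (vars (Z i)) (vars (Z j))) :
    (mvars (↑(List.ofFn Z) : Multiset (Clause n))).card = 2 * k := by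
  rw [mvars_ofFn_eq, Finset.card_biUnion (fun i _ j _ h => hZ i j h)]
  simp [vars_card, two_mul, mul_comm]

/-- A canonical satisfying assignment for a matching formula. -/
noncomputable def witness (Z : Fin k → Clause n) : PAssign n := fun x =>
  if h : ∃ i, x ∈ vars (Z i) then
    some (if x = (Z (Classical.choose h)).val.1.1 then (Z (Classical.choose h)).val.1.2
          else (Z (Classical.choose h)).val.2.2)
  else none

lemma witness_sat (Z : Fin k → Clause n)
    (hZ : ∀ i j, i ≠ j → Disjoint (vars (Z i)) (vars (Z j))) :
    satAssign (↑(List.ofFn Z) : Multiset (Clause n)) (witness Z) := by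
  rw [satAssign_ofFn_iff]
  constructor
  · ext x
    simp only [mem_support_iff, witness, Finset.mem_biUnion, Finset.mem_univ, true_and]
    split
    · simpa using ‹∃ i, x ∈ vars (Z i)›
    · simpa using ‹¬ ∃ i, x ∈ vars (Z i)›
  · intro i
    left
    have hv : (Z i).val.1.1 ∈ vars (Z i) := by simp [vars]
    have hex : ∃ j, (Z i).val.1.1 ∈ vars (Z j) := ⟨i, hv⟩
    have hji : Classical.choose hex = i := by
      by_contra hne
      exact (Finset.disjoint_left.mp (hZ _ _ hne) (Classical.choose_spec hex)) hv
    rw [plitVal]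
    have hw : witness Z (Z i).val.1.1 = some (Z i).val.1.2 := by
      rw [witness, dif_pos hex]
      simp [hji]
    rw [hw]
    cases h2 : (Z i).val.1.2 <;> simp [h2]

/-- Action of a variable permutation `π` and sign flips `s` on literals. -/
def mapLit (π : Equiv.Perm (Fin n)) (s : Fin n → Bool) (ℓ : Fin n × Bool) : Fin n × Bool :=
  (π ℓ.1, xor ℓ.2 (s (π ℓ.1)))

/-- Action on partial assignments. -/
def mapP (π : Equiv.Perm (Fin n)) (s : Fin n → Bool) (γ : PAssign n) : PAssign n :=
  fun x => (γ (π.symm x)).map (fun c => xor c (s x))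

/-- Action on clauses. -/
def mapClause (π : Equiv.Perm (Fin n)) (s : Fin n → Bool) (C : Clause n) : Clause n :=
  if h : π C.val.1.1 < π C.val.2.1 then ⟨(mapLit π s C.val.1, mapLit π s C.val.2), h⟩
  else ⟨(mapLit π s C.val.2, mapLit π s C.val.1), by
    rcases lt_trichotomy (π C.val.1.1) (π C.val.2.1) with h1|h1|h1
    · exact absurd h1 h
    · exact absurd (π.injective h1) C.prop.ne
    · exact h1⟩

lemma plitVal_mapP (π : Equiv.Perm (Fin n)) (s : Fin n → Bool) (γ : PAssign n)
    (ℓ : Fin n × Bool) : plitVal (mapP π s γ) (mapLit π s ℓ) = plitVal γ ℓ := by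
  obtain ⟨v, p⟩ := ℓ
  simp only [plitVal, mapP, mapLit, Equiv.symm_apply_apply, Option.map_map]
  cases γ v with
  | none => rfl
  | some c =>
    simp only [Option.map_some, Function.comp_apply, Option.some.injEq]
    rcases Bool.dichotomy (s (π v)) with hs | hs <;> simp only [hs] <;>
      cases p <;> cases c <;> rfl

lemma pClauseSat_mapP (π : Equiv.Perm (Fin n)) (s : Fin n → Bool) (γ : PAssign n)
    (C : Clause n) : pClauseSat (mapP π s γ) (mapClause π s C) ↔ pClauseSat γ C := by
  unfold pClauseSat mapClause
  split
  · simp only [plitVal_mapP]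
  · simp only [plitVal_mapP]; exact or_comm

lemma vars_mapClause (π : Equiv.Perm (Fin n)) (s : Fin n → Bool) (C : Clause n) :
    vars (mapClause π s C) = (vars C).image π := by
  unfold mapClause
  split <;> (ext x; simp only [vars, mapLit, Finset.mem_insert, Finset.mem_singleton,
    Finset.mem_image]; aesop)

lemma support_mapP (π : Equiv.Perm (Fin n)) (s : Fin n → Bool) (γ : PAssign n) :
    support (mapP π s γ) = (support γ).image π := by
  ext x
  simp only [support, mapP, Finset.mem_filter, Finset.mem_univ, true_and, Finset.mem_image,
    Option.isSome_map]
  constructor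
  · intro h; exact ⟨π.symm x, h, by simp⟩
  · rintro ⟨y, hy, rfl⟩; simpa using hy

lemma mapLit_injective (π : Equiv.Perm (Fin n)) (s : Fin n → Bool) :
    Function.Injective (mapLit π s) := by
  rintro ⟨v, p⟩ ⟨w, q⟩ h
  simp only [mapLit, Prod.mk.injEq] at h
  obtain ⟨h1, h2⟩ := h
  have hvw : v = w := π.injective h1
  subst hvw
  refine Prod.ext rfl ?_
  show p = q
  revert h2
  cases s (π v) <;> cases p <;> cases q <;> decide

lemma mapClause_injective (π : Equiv.Perm (Fin n)) (s : Fin n → Bool) :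
    Function.Injective (mapClause π s) := by
  intro C C' h
  unfold mapClause at h
  split at h <;> split at h <;>
    (replace h := Subtype.mk.inj h; rw [Prod.mk.injEq] at h;
     obtain ⟨h1, h2⟩ := h)
  · exact Subtype.ext (Prod.ext (mapLit_injective π s h1) (mapLit_injective π s h2))
  · have e1 := mapLit_injective π s h1
    have e2 := mapLit_injective π s h2
    have hlt : C.val.1.1 < C.val.1.1 := by
      calc C.val.1.1 < C.val.2.1 := C.prop
        _ = C'.val.1.1 := by rw [e2]
        _ < C'.val.2.1 := C'.prop
        _ = C.val.1.1 := by rw [e1]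
    exact absurd hlt (lt_irrefl _)
  · have e1 := mapLit_injective π s h1
    have e2 := mapLit_injective π s h2
    have hlt : C.val.1.1 < C.val.1.1 := by
      calc C.val.1.1 < C.val.2.1 := C.prop
        _ = C'.val.1.1 := by rw [e1]
        _ < C'.val.2.1 := C'.prop
        _ = C.val.1.1 := by rw [e2]
    exact absurd hlt (lt_irrefl _)
  · exact Subtype.ext (Prod.ext (mapLit_injective π s h2) (mapLit_injective π s h1))

/-- The action on partial assignments is a bijection. -/
def pEquiv (π : Equiv.Perm (Fin n)) (s : Fin n → Bool) : PAssign n ≃ PAssign n where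
  toFun := mapP π s
  invFun := mapP π.symm (fun x => s (π x))
  left_inv := by
    intro γ; funext x
    simp only [mapP, Equiv.symm_symm, Equiv.symm_apply_apply, Option.map_map]
    cases γ x with
    | none => rfl
    | some c =>
      simp only [Option.map_some, Function.comp_apply]
      rcases Bool.dichotomy (s (π x)) with hs | hs <;> simp only [hs] <;> cases c <;> rfl
  right_inv := by
    intro γ; funext x
    simp only [mapP, Equiv.symm_symm, Equiv.apply_symm_apply, Option.map_map]
    cases γ x with
    | none => rfl
    | some c =>
      simp only [Option.map_some, Function.comp_apply]
      rcases Bool.dichotomy (s x) with hs | hs <;> simp only [hs] <;> cases c <;> rfl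

lemma satAssign_mapP (π : Equiv.Perm (Fin n)) (s : Fin n → Bool) (Z : Fin k → Clause n)
    (γ : PAssign n) :
    satAssign (↑(List.ofFn (fun i => mapClause π s (Z i))) : Multiset (Clause n)) (mapP π s γ)
      ↔ satAssign (↑(List.ofFn Z) : Multiset (Clause n)) γ := by
  rw [satAssign_ofFn_iff, satAssign_ofFn_iff]
  apply and_congr
  · rw [support_mapP]
    simp only [vars_mapClause]
    have himg : (univ.biUnion fun i => (vars (Z i)).image π)
        = (univ.biUnion fun i => vars (Z i)).image π := by
      ext x
      simp only [Finset.mem_biUnion, Finset.mem_image, Finset.mem_univ, true_and]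
      tauto
    rw [himg]
    exact (Finset.image_injective π.injective).eq_iff
  · exact forall_congr' fun i => pClauseSat_mapP π s γ (Z i)

lemma card_sat_mapP (π : Equiv.Perm (Fin n)) (s : Fin n → Bool) (Z : Fin k → Clause n) :
    Nat.card {γ : PAssign n //
        satAssign (↑(List.ofFn fun i => mapClause π s (Z i)) : Multiset (Clause n)) γ}
      = Nat.card {γ : PAssign n // satAssign (↑(List.ofFn Z) : Multiset (Clause n)) γ} := by
  refine Nat.card_congr (Equiv.symm ?_)
  exact Equiv.subtypeEquiv (pEquiv π s) (fun γ => (satAssign_mapP π s Z γ).symm)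

/-- The type of matching formulas. -/
abbrev MD (n k : ℕ) :=
  {Z : Fin k → Clause n // ∀ i j, i ≠ j → Disjoint (vars (Z i)) (vars (Z j))}

/-- The summand in the two-stage probability. -/
noncomputable def G (n k : ℕ) (β : PAssign n) (Z : MD n k) : ℝ :=
  if satAssign (↑(List.ofFn Z.val) : Multiset (Clause n)) β then
    (1 : ℝ) / (Nat.card {γ : PAssign n //
      satAssign (↑(List.ofFn Z.val) : Multiset (Clause n)) γ} : ℝ)
  else 0

/-- The action on matching formulas. -/
def mapMD (π : Equiv.Perm (Fin n)) (s : Fin n → Bool) : MD n k → MD n k := fun Z =>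
  ⟨fun i => mapClause π s (Z.val i), by
    intro i j hij
    simp only [vars_mapClause]
    exact (Finset.disjoint_image π.injective).mpr (Z.prop i j hij)⟩

lemma mapMD_bijective (π : Equiv.Perm (Fin n)) (s : Fin n → Bool) :
    Function.Bijective (mapMD (n := n) (k := k) π s) := by
  have hinj : Function.Injective (mapMD (n := n) (k := k) π s) := by
    intro Z Z' h
    apply Subtype.ext; funext i
    exact mapClause_injective π s (congrFun (congrArg Subtype.val h) i)
  exact Finite.injective_iff_bijective.mp hinj

lemma G_mapMD (π : Equiv.Perm (Fin n)) (s : Fin n → Bool) (β : PAssign n) (Z : MD n k) :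
    G n k (mapP π s β) (mapMD π s Z) = G n k β Z := by
  unfold G mapMD
  rw [card_sat_mapP π s Z.val]
  exact if_congr (satAssign_mapP π s Z.val β) rfl rfl

lemma sum_G_eq (β α₀ : PAssign n) (hβ : (support β).card = (support α₀).card) :
    ∑ Z : MD n k, G n k β Z = ∑ Z : MD n k, G n k α₀ Z := by
  classical
  let e : {x // x ∈ support β} ≃ {x // x ∈ support α₀} := Finset.equivOfCardEq hβ
  let π : Equiv.Perm (Fin n) := e.extendSubtype
  let s : Fin n → Bool := fun x => ((β (π.symm x)).getD false).xor ((α₀ x).getD false)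
  have hmem : ∀ x, x ∈ support β ↔ π x ∈ support α₀ := by
    intro x
    constructor
    · intro hx
      rw [show π x = ↑(e ⟨x, hx⟩) from Equiv.extendSubtype_apply_of_mem e x hx]
      exact (e ⟨x, hx⟩).prop
    · intro hx
      by_contra hxn
      exact Equiv.extendSubtype_not_mem e x hxn hx
  have hmap : mapP π s β = α₀ := by
    funext x
    have hx' : π.symm x ∈ support β ↔ x ∈ support α₀ := by
      rw [hmem (π.symm x), Equiv.apply_symm_apply]
    by_cases hx : x ∈ support α₀
    · obtain ⟨b, hb⟩ := Option.isSome_iff_exists.mp (mem_support_iff.mp (hx'.mpr hx))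
      obtain ⟨c, hc⟩ := Option.isSome_iff_exists.mp (mem_support_iff.mp hx)
      simp only [mapP, s, hb, hc, Option.map_some, Option.getD_some]
      cases b <;> cases c <;> rfl
    · have h1 : β (π.symm x) = none := by
        rw [← Option.not_isSome_iff_eq_none]
        exact fun h => hx (hx'.mp (mem_support_iff.mpr h))
      have h2 : α₀ x = none := by
        rw [← Option.not_isSome_iff_eq_none]
        exact fun h => hx (mem_support_iff.mpr h)
      simp [mapP, h1, h2]
  calc ∑ Z : MD n k, G n k β Z = ∑ Z : MD n k, G n k α₀ (mapMD π s Z) := by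
        refine Finset.sum_congr rfl fun Z _ => ?_
        rw [← hmap, G_mapMD]
      _ = ∑ Z : MD n k, G n k α₀ Z :=
        Fintype.sum_bijective _ (mapMD_bijective π s) _ _ (fun Z => rfl)

lemma sum_G_over_beta (Z : MD n k) : ∑ β : PAk n (2 * k), G n k β.val Z = 1 := by
  classical
  have hpos : 0 < Nat.card {γ : PAssign n //
      satAssign (↑(List.ofFn Z.val) : Multiset (Clause n)) γ} :=
    @Nat.card_pos _ ⟨⟨witness Z.val, witness_sat Z.val Z.prop⟩⟩ _
  unfold G
  rw [Finset.sum_ite _ _, Finset.sum_const, Finset.sum_const_zero, add_zero, nsmul_eq_mul]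
  have hcardeq : (Finset.univ.filter fun β : PAk n (2 * k) =>
      satAssign (↑(List.ofFn Z.val) : Multiset (Clause n)) β.val).card
      = Nat.card {γ : PAssign n // satAssign (↑(List.ofFn Z.val) : Multiset (Clause n)) γ} := by
    rw [← Fintype.card_subtype, Nat.card_eq_fintype_card]
    refine Fintype.card_congr (Equiv.subtypeSubtypeEquivSubtype ?_)
    intro γ hγ
    rw [hγ.1, mvars_card Z.val Z.prop]
  rw [hcardeq, mul_one_div, div_self (by exact_mod_cast hpos.ne')]

noncomputable def supportEquiv (S : Finset (Fin n)) :
    {α : PAssign n // support α = S} ≃ (↥S → Bool) where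
  toFun α x := (α.val x.val).getD false
  invFun f := ⟨fun x => if h : x ∈ S then some (f ⟨x, h⟩) else none, by
    ext x
    simp only [mem_support_iff]
    split <;> simp_all⟩
  left_inv := by
    rintro ⟨α, rfl⟩
    apply Subtype.ext; funext x
    by_cases h : x ∈ support α
    · obtain ⟨b, hb⟩ := Option.isSome_iff_exists.mp (mem_support_iff.mp h)
      simp [h, hb]
    · have h0 : α x = none :=
        Option.not_isSome_iff_eq_none.mp (fun hs => h (mem_support_iff.mpr hs))
      simp [h, h0]
  right_inv f := by
    funext x
    simp only
    rw [dif_pos x.prop]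
    rfl

lemma card_PAk (n m : ℕ) : Nat.card (PAk n m) = 2 ^ m * n.choose m := by
  classical
  rw [Nat.card_eq_fintype_card, Fintype.card_subtype]
  rw [Finset.card_eq_sum_card_fiberwise (f := fun α : PAssign n => support α)
    (t := Finset.univ.powersetCard m) (fun α hα => by
      rw [Finset.mem_coe, Finset.mem_powersetCard_univ]; exact (Finset.mem_filter.mp (Finset.mem_coe.mp hα)).2)]
  have hfib : ∀ S ∈ Finset.univ.powersetCard m,
      ((Finset.univ.filter fun α : PAssign n => (support α).card = m).filter
        fun α => support α = S).card = 2 ^ m := by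
    intro S hS
    rw [Finset.mem_powersetCard_univ] at hS
    have h1 : ((Finset.univ.filter fun α : PAssign n => (support α).card = m).filter
        fun α => support α = S) = Finset.univ.filter fun α : PAssign n => support α = S := by
      rw [Finset.filter_filter]
      apply Finset.filter_congr
      intro α _
      exact ⟨fun h => h.2, fun h => ⟨by rw [h, hS], h⟩⟩
    rw [h1, ← Fintype.card_subtype, Fintype.card_congr (supportEquiv S), Fintype.card_fun,
      Fintype.card_coe, hS, Fintype.card_bool]
  rw [Finset.sum_congr rfl hfib, Finset.sum_const, smul_eq_mul, Finset.card_powersetCard,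
    Finset.card_univ, Fintype.card_fin, mul_comm]

lemma MD_nonempty (hk : 2 * k ≤ n) : Nonempty (MD n k) := by
  refine ⟨⟨fun i => ⟨((⟨2 * i.val, by have := i.isLt; omega⟩, true),
      (⟨2 * i.val + 1, by have := i.isLt; omega⟩, true)), by simp [Fin.mk_lt_mk]⟩, ?_⟩⟩
  intro i j hij
  have hij' : i.val ≠ j.val := fun h => hij (Fin.ext h)
  rw [Finset.disjoint_left]
  intro a ha hb
  simp only [vars, Finset.mem_insert, Finset.mem_singleton, Fin.ext_iff, Fin.val_mk] at ha hb
  omega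

end TwoStageHelpers

/-- Draw `Z` uniformly among all matching formulas with `k` clauses over `x_1,…,x_n`,
then draw `α` uniformly in `sat(Z)`.  The resulting `α` is uniform over all
`2^{2k}·(n choose 2k)` partial assignments defined on exactly `2k` variables: for every
fixed such partial assignment `α₀`, `Pr[α = α₀] = 1/(2^{2k}·(n choose 2k))`. -/
theorem two_stage_uniform (n k : ℕ) (hk : 2 * k ≤ n) (α₀ : PAssign n)
    (hα₀ : (support α₀).card = 2 * k) :
    (∑ Z : {Z : Fin k → Clause n // ∀ i j, i ≠ j → Disjoint (vars (Z i)) (vars (Z j))},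
        (if satAssign (↑(List.ofFn Z.val) : Multiset (Clause n)) α₀ then
          (1 : ℝ) / (Nat.card {β : PAssign n //
            satAssign (↑(List.ofFn Z.val) : Multiset (Clause n)) β} : ℝ)
        else 0))
      / (Nat.card {Z : Fin k → Clause n //
          ∀ i j, i ≠ j → Disjoint (vars (Z i)) (vars (Z j))} : ℝ)
      = 1 / ((2 : ℝ) ^ (2 * k) * (n.choose (2 * k) : ℝ)) := by
  classical
  have hMcard : Nat.card (PAk n (2 * k)) = 2 ^ (2 * k) * n.choose (2 * k) := card_PAk n (2 * k)
  have hAne : Nonempty (MD n k) := MD_nonempty hk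
  have hApos : 0 < Nat.card (MD n k) := Nat.card_pos
  show (∑ Z : MD n k, G n k α₀ Z) / (Nat.card (MD n k) : ℝ)
      = 1 / ((2 : ℝ) ^ (2 * k) * (n.choose (2 * k) : ℝ))
  have key : (Nat.card (PAk n (2 * k)) : ℝ) * (∑ Z : MD n k, G n k α₀ Z)
      = (Nat.card (MD n k) : ℝ) := by
    have h1 : ∑ β : PAk n (2 * k), ∑ Z : MD n k, G n k β.val Z
        = ∑ _β : PAk n (2 * k), ∑ Z : MD n k, G n k α₀ Z :=
      Finset.sum_congr rfl fun β _ => sum_G_eq β.val α₀ (by rw [β.prop, hα₀])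
    have h2 : ∑ β : PAk n (2 * k), ∑ Z : MD n k, G n k β.val Z
        = ∑ Z : MD n k, ∑ β : PAk n (2 * k), G n k β.val Z := Finset.sum_comm
    have h3 : ∑ Z : MD n k, ∑ β : PAk n (2 * k), G n k β.val Z
        = (Nat.card (MD n k) : ℝ) := by
      rw [Finset.sum_congr rfl fun Z _ => sum_G_over_beta Z, Finset.sum_const,
        nsmul_eq_mul, mul_one, Finset.card_univ, Nat.card_eq_fintype_card]
    rw [← h3, ← h2, h1, Finset.sum_const, nsmul_eq_mul, Finset.card_univ,
      Nat.card_eq_fintype_card]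
  have hM : (Nat.card (PAk n (2 * k)) : ℝ) = (2 : ℝ) ^ (2 * k) * (n.choose (2 * k) : ℝ) := by
    rw [hMcard]; push_cast; ring
  have hA0 : (Nat.card (MD n k) : ℝ) ≠ 0 := by exact_mod_cast hApos.ne'
  have hM0 : (Nat.card (PAk n (2 * k)) : ℝ) ≠ 0 := by
    rw [hM]
    have := Nat.choose_pos hk
    have hc : (0:ℝ) < (n.choose (2*k) : ℝ) := by exact_mod_cast this
    positivity
  rw [← hM, div_eq_div_iff hA0 hM0]
  linear_combination key
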